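/- Let A be an n×n complex matrix with all eigenvalues nonzero, eigenvalues π₁,...,πₙ ordered by decreasing modulus. For i = 2, ..., n−1 and each m, the i-th singular value of Aᵐ satisfies: limsup_{m→∞} σᵢ(Aᵐ)^{1/m} ≤ |πᵢ| and liminf_{m→∞} σᵢ(Aᵐ)^{1/m} ≥ |πᵢ|, given that the corresponding statements hold for the two principal submatrices of the Schur triangularization of A obtained by deleting the first row/column and the last row/column respectively. -/

import Mathlib

open Matrix Polynomial Filter

/-- `σ` lists the singular values of `A` in decreasing order (with multiplicity). -/
def IsSingularValues {n : ℕ} (A : Matrix (Fin n) (Fin n) ℂ) (σ : Fin n → ℝ) : Prop :=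
  Antitone σ ∧ (∀ i, 0 ≤ σ i) ∧
    (Aᴴ * A).charpoly = ∏ i : Fin n, (X - C ((σ i : ℂ) ^ 2))

/-!
Conjugation by `U` does not change singular values, so `σ m` lists the singular values of `Tᵐ`.
Since `Tᵐ` is upper triangular, deleting the last row and column commutes with `M ↦ Mᴴ M`, and
deleting the first row and column commutes with `M ↦ M Mᴴ`, which has the same spectrum as
`Mᴴ M`; the corners of `Tᵐ` are the `m`-th powers of the corners of `T`. Cauchy interlacing for
these Hermitian matrices therefore gives `σₙ m i ≤ σ m i ≤ σ₁ m (i - 1)`, and the `m`-th roots of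
both outer sequences tend to `‖π i‖`.

Cauchy interlacing is the Courant–Fischer intersection argument: for instance, the span of the
top `k + 1` eigenvectors of the compression and the span of the bottom `n + 1 - k` eigenvectors
of the operator have dimensions adding up to more than `n + 1`, so they share a nonzero vector,
on which the Rayleigh quotient is squeezed between the two eigenvalues.
-/

open Module Submodule RCLike
open scoped InnerProductSpace

section

variable {𝕜 E : Type*} [RCLike 𝕜] [NormedAddCommGroup E] [InnerProductSpace 𝕜 E]
  {T : E →ₗ[𝕜] E} {ι : Type*} [Fintype ι] {v : ι → E} {μ : ι → ℝ}

theorem Orthonormal.re_inner_sum_smul_map_sum_smul (hv : Orthonormal 𝕜 v)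
    (hTv : ∀ i, T (v i) = (μ i : 𝕜) • v i) (l : ι → 𝕜) :
    re ⟪∑ i, l i • v i, T (∑ i, l i • v i)⟫_𝕜 = ∑ i, μ i * ‖l i‖ ^ 2 := by
  have hT : T (∑ i, l i • v i) = ∑ i, (μ i * l i : 𝕜) • v i := by
    simp only [map_sum, map_smul, hTv, smul_smul, mul_comm]
  rw [hT, hv.inner_sum, map_sum]
  refine Finset.sum_congr rfl fun i _ => ?_
  rw [mul_left_comm, RCLike.conj_mul, ← ofReal_pow, ← ofReal_mul, ofReal_re]

theorem Orthonormal.norm_sum_smul_sq (hv : Orthonormal 𝕜 v) (l : ι → 𝕜) :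
    ‖∑ i, l i • v i‖ ^ 2 = ∑ i, ‖l i‖ ^ 2 := by
  simpa using hv.re_inner_sum_smul_map_sum_smul (T := LinearMap.id) (μ := 1) (by simp) l

theorem Orthonormal.re_inner_map_self_le_of_mem_span (hv : Orthonormal 𝕜 v)
    (hTv : ∀ i, T (v i) = (μ i : 𝕜) • v i) {c : ℝ} (hμ : ∀ i, μ i ≤ c) {x : E}
    (hx : x ∈ span 𝕜 (Set.range v)) : re ⟪x, T x⟫_𝕜 ≤ c * ‖x‖ ^ 2 := by
  obtain ⟨l, rfl⟩ := (mem_span_range_iff_exists_fun 𝕜).mp hx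
  rw [hv.re_inner_sum_smul_map_sum_smul hTv, hv.norm_sum_smul_sq, Finset.mul_sum]
  gcongr with i
  exact hμ i

theorem Orthonormal.le_re_inner_map_self_of_mem_span (hv : Orthonormal 𝕜 v)
    (hTv : ∀ i, T (v i) = (μ i : 𝕜) • v i) {c : ℝ} (hμ : ∀ i, c ≤ μ i) {x : E}
    (hx : x ∈ span 𝕜 (Set.range v)) : c * ‖x‖ ^ 2 ≤ re ⟪x, T x⟫_𝕜 := by
  obtain ⟨l, rfl⟩ := (mem_span_range_iff_exists_fun 𝕜).mp hx
  rw [hv.re_inner_sum_smul_map_sum_smul hTv, hv.norm_sum_smul_sq, Finset.mul_sum]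
  gcongr with i
  exact hμ i

end

theorem Submodule.exists_mem_inf_ne_zero_of_finrank_lt_add {K V : Type*} [DivisionRing K]
    [AddCommGroup V] [Module K V] [FiniteDimensional K V] {P Q : Submodule K V}
    (h : finrank K V < finrank K P + finrank K Q) : ∃ x ∈ P ⊓ Q, x ≠ 0 := by
  refine exists_mem_ne_zero_of_ne_bot fun hbot => ?_
  have hsum := finrank_sup_add_finrank_inf_eq P Q
  rw [hbot, finrank_bot] at hsum
  have hle := (P ⊔ Q).finrank_le
  omega

theorem le_of_finrank_lt_add {K E : Type*} [DivisionRing K] [NormedAddCommGroup E] [Module K E]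
    [FiniteDimensional K E] {V W : Submodule K E}
    (hVW : finrank K E < finrank K V + finrank K W) {q : E → ℝ} {c c' : ℝ}
    (hV : ∀ x ∈ V, c * ‖x‖ ^ 2 ≤ q x) (hW : ∀ x ∈ W, q x ≤ c' * ‖x‖ ^ 2) : c ≤ c' := by
  obtain ⟨x, ⟨hxV, hxW⟩, hx⟩ := exists_mem_inf_ne_zero_of_finrank_lt_add hVW
  exact le_of_mul_le_mul_right ((hV x hxV).trans (hW x hxW)) (by positivity)

namespace LinearMap.IsSymmetric

variable {𝕜 E E' : Type*} [RCLike 𝕜] [NormedAddCommGroup E] [InnerProductSpace 𝕜 E]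
  [FiniteDimensional 𝕜 E] [NormedAddCommGroup E'] [InnerProductSpace 𝕜 E']
  [FiniteDimensional 𝕜 E'] {T : E →ₗ[𝕜] E} {T' : E' →ₗ[𝕜] E'}

theorem eigenvalues_interlace (hT : T.IsSymmetric) (hT' : T'.IsSymmetric) {n : ℕ}
    (hn : finrank 𝕜 E = n + 1) (hn' : finrank 𝕜 E' = n) (J : E' →ₗᵢ[𝕜] E)
    (hJ : ∀ x y, ⟪J x, T (J y)⟫_𝕜 = ⟪x, T' y⟫_𝕜) (k : Fin n) :
    hT'.eigenvalues hn' k ≤ hT.eigenvalues hn k.castSucc ∧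
      hT.eigenvalues hn k.succ ≤ hT'.eigenvalues hn' k := by
  set u := hT.eigenvectorBasis hn
  set w := hT'.eigenvectorBasis hn'
  have hu (s : Set (Fin (n + 1))) : Orthonormal 𝕜 fun j : s => u j :=
    u.orthonormal.comp _ Subtype.val_injective
  have hw (s : Set (Fin n)) : Orthonormal 𝕜 fun j : s => w j :=
    w.orthonormal.comp _ Subtype.val_injective
  have hdimJ (s : Set (Fin n)) [Fintype s] :
      finrank 𝕜 ((span 𝕜 (Set.range fun j : s => w j)).map J.toLinearMap) = Fintype.card s := by
    rw [← (equivMapOfInjective _ J.injective _).finrank_eq,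
      finrank_span_eq_card (hw s).linearIndependent]
  have hTu (j : Fin (n + 1)) := hT.apply_eigenvectorBasis hn j
  have hTw (j : Fin n) := hT'.apply_eigenvectorBasis hn' j
  constructor
  · refine le_of_finrank_lt_add (q := fun x => re ⟪x, T x⟫_𝕜)
      (V := (span 𝕜 (Set.range fun j : Set.Iic k => w j)).map J.toLinearMap)
      (W := span 𝕜 (Set.range fun j : Set.Ici k.castSucc => u j)) ?_ ?_ ?_
    · rw [hdimJ, finrank_span_eq_card (hu _).linearIndependent, hn, Fintype.card_Iic,
        Fintype.card_Ici, Fin.card_Iic, Fin.card_Ici, Fin.val_castSucc]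
      omega
    · rintro _ ⟨y, hy, rfl⟩
      simp only [LinearIsometry.coe_toLinearMap, hJ, J.norm_map]
      exact (hw _).le_re_inner_map_self_of_mem_span (fun j => hTw j)
        (fun j => hT'.eigenvalues_antitone hn' j.2) hy
    · exact fun x hx => (hu _).re_inner_map_self_le_of_mem_span (fun j => hTu j)
        (fun j => hT.eigenvalues_antitone hn j.2) hx
  · refine le_of_finrank_lt_add (q := fun x => re ⟪x, T x⟫_𝕜)
      (V := span 𝕜 (Set.range fun j : Set.Iic k.succ => u j))
      (W := (span 𝕜 (Set.range fun j : Set.Ici k => w j)).map J.toLinearMap) ?_ ?_ ?_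
    · rw [hdimJ, finrank_span_eq_card (hu _).linearIndependent, hn, Fintype.card_Iic,
        Fintype.card_Ici, Fin.card_Iic, Fin.card_Ici, Fin.val_succ]
      omega
    · exact fun x hx => (hu _).le_re_inner_map_self_of_mem_span (fun j => hTu j)
        (fun j => hT.eigenvalues_antitone hn j.2) hx
    · rintro _ ⟨y, hy, rfl⟩
      simp only [LinearIsometry.coe_toLinearMap, hJ, J.norm_map]
      exact (hw _).re_inner_map_self_le_of_mem_span (fun j => hTw j)
        (fun j => hT'.eigenvalues_antitone hn' j.2) hy

end LinearMap.IsSymmetric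

theorem Matrix.inner_toEuclideanLin_toEuclideanLin {𝕜 l m n : Type*} [RCLike 𝕜] [Fintype l]
    [Fintype m] [Fintype n] [DecidableEq l] [DecidableEq m] [DecidableEq n] (A : Matrix l m 𝕜)
    (B : Matrix l n 𝕜) (x : EuclideanSpace 𝕜 m) (y : EuclideanSpace 𝕜 n) :
    ⟪toEuclideanLin A x, toEuclideanLin B y⟫_𝕜 = ⟪x, toEuclideanLin (Aᴴ * B) y⟫_𝕜 := by
  rw [← LinearMap.adjoint_inner_right, ← toEuclideanLin_conjTranspose_eq_adjoint,
    toLpLin_mul (q := 2)]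
  rfl

theorem Matrix.exists_linearIsometry_inner_toEuclideanLin_submatrix {𝕜 m n : Type*} [RCLike 𝕜]
    [Fintype m] [Fintype n] [DecidableEq m] [DecidableEq n] (H : Matrix n n 𝕜) {f : m → n}
    (hf : Function.Injective f) :
    ∃ J : EuclideanSpace 𝕜 m →ₗᵢ[𝕜] EuclideanSpace 𝕜 n, ∀ x y,
      ⟪J x, toEuclideanLin H (J y)⟫_𝕜 = ⟪x, toEuclideanLin (H.submatrix f f) y⟫_𝕜 := by
  set P : Matrix n m 𝕜 := (1 : Matrix n n 𝕜).submatrix (Equiv.refl n) f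
  have hPstar : Pᴴ = (1 : Matrix n n 𝕜).submatrix f (Equiv.refl n) := by
    rw [conjTranspose_submatrix, conjTranspose_one]
  have hPP : Pᴴ * P = 1 := by
    rw [hPstar, one_submatrix_mul, submatrix_submatrix]
    exact submatrix_one _ hf
  have hPHP : Pᴴ * (H * P) = H.submatrix f f := by
    rw [hPstar, one_submatrix_mul, mul_submatrix_one (Equiv.refl n), submatrix_submatrix]
    rfl
  refine ⟨(toEuclideanLin P).isometryOfInner fun x y => ?_, fun x y => ?_⟩
  · rw [inner_toEuclideanLin_toEuclideanLin, hPP, toLpLin_one]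
    rfl
  · show ⟪toEuclideanLin P x, toEuclideanLin H (toEuclideanLin P y)⟫_𝕜 = _
    rw [← LinearMap.comp_apply, ← toLpLin_mul_same, inner_toEuclideanLin_toEuclideanLin, hPHP]

theorem Matrix.IsHermitian.eigenvalues_eq_of_charpoly_eq {𝕜 : Type*} [RCLike 𝕜] {N : ℕ}
    {H : Matrix (Fin N) (Fin N) 𝕜} (hH : H.IsHermitian) {a : Fin N → ℝ} (ha : Antitone a)
    (h : H.charpoly = ∏ i, (X - C (a i : 𝕜))) :
    (isSymmetric_toEuclideanLin_iff.mpr hH).eigenvalues finrank_euclideanSpace_fin = a := by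
  apply List.ofFn_injective
  have hchar : (toEuclideanLin H).charpoly = H.charpoly := charpoly_toLin H (PiLp.basisFun 2 𝕜 _)
  rw [← LinearMap.IsSymmetric.sort_roots_charpoly_eq_eigenvalues, hchar, h, roots_prod _ _ (by simp [Finset.prod_ne_zero_iff, X_sub_C_ne_zero])]
  simp only [roots_X_sub_C, Multiset.bind_singleton, Fin.univ_val_map, Multiset.map_coe,
    List.map_ofFn, Function.comp_def, ofReal_re, Multiset.coe_sort]
  exact List.mergeSort_of_pairwise (by simpa [List.sortedGE_iff_pairwise] using ha.sortedGE_ofFn)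

theorem Matrix.IsHermitian.interlace {𝕜 : Type*} [RCLike 𝕜] {n : ℕ}
    {H : Matrix (Fin (n + 1)) (Fin (n + 1)) 𝕜} (hH : H.IsHermitian) {f : Fin n → Fin (n + 1)}
    (hf : Function.Injective f) {a : Fin (n + 1) → ℝ} {b : Fin n → ℝ} (ha : Antitone a)
    (hb : Antitone b) (hHa : H.charpoly = ∏ i, (X - C (a i : 𝕜)))
    (hHb : (H.submatrix f f).charpoly = ∏ i, (X - C (b i : 𝕜))) (k : Fin n) :
    b k ≤ a k.castSucc ∧ a k.succ ≤ b k := by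
  obtain ⟨J, hJ⟩ := exists_linearIsometry_inner_toEuclideanLin_submatrix H hf
  rw [← hH.eigenvalues_eq_of_charpoly_eq ha hHa,
    ← (hH.submatrix f).eigenvalues_eq_of_charpoly_eq hb hHb]
  exact LinearMap.IsSymmetric.eigenvalues_interlace _ _ _ _ J hJ k

namespace Matrix.IsUpperTriangular

variable {R : Type*} [Semiring R] {n : ℕ} {M N : Matrix (Fin (n + 1)) (Fin (n + 1)) R}

theorem submatrix_succ_mul (hM : M.IsUpperTriangular) (N : Matrix (Fin (n + 1)) (Fin (n + 1)) R) :
    (M * N).submatrix Fin.succ Fin.succ =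
      M.submatrix Fin.succ Fin.succ * N.submatrix Fin.succ Fin.succ := by
  ext i j
  have h0 : M i.succ 0 = 0 := hM (Fin.succ_pos i)
  simp [mul_apply, Fin.sum_univ_succ, h0]

theorem submatrix_castSucc_mul (M : Matrix (Fin (n + 1)) (Fin (n + 1)) R)
    (hN : N.IsUpperTriangular) :
    (M * N).submatrix Fin.castSucc Fin.castSucc =
      M.submatrix Fin.castSucc Fin.castSucc * N.submatrix Fin.castSucc Fin.castSucc := by
  ext i j
  have h0 : N (Fin.last n) j.castSucc = 0 := hN (Fin.castSucc_lt_last j)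
  simp [mul_apply, Fin.sum_univ_castSucc, h0]

theorem submatrix_succ_pow (hM : M.IsUpperTriangular) (m : ℕ) :
    (M ^ m).submatrix Fin.succ Fin.succ = M.submatrix Fin.succ Fin.succ ^ m := by
  induction m with
  | zero => simp [submatrix_one _ (Fin.succ_injective _)]
  | succ m ih => rw [pow_succ, submatrix_succ_mul (hM.pow m), ih, pow_succ]

theorem submatrix_castSucc_pow (hM : M.IsUpperTriangular) (m : ℕ) :
    (M ^ m).submatrix Fin.castSucc Fin.castSucc = M.submatrix Fin.castSucc Fin.castSucc ^ m := by
  induction m with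
  | zero => simp [submatrix_one _ (Fin.castSucc_injective _)]
  | succ m ih => rw [pow_succ, submatrix_castSucc_mul _ hM, ih, pow_succ]

end Matrix.IsUpperTriangular

namespace IsSingularValues

variable {n : ℕ} {M : Matrix (Fin n) (Fin n) ℂ} {σ : Fin n → ℝ}

theorem antitone_sq (h : IsSingularValues M σ) : Antitone fun i => σ i ^ 2 :=
  fun _ j hij => pow_le_pow_left₀ (h.2.1 j) (h.1 hij) 2

theorem charpoly_conjTranspose_mul_self (h : IsSingularValues M σ) :
    (Mᴴ * M).charpoly = ∏ i, (X - C ((σ i ^ 2 : ℝ) : ℂ)) := by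
  rw [h.2.2]
  push_cast
  rfl

end IsSingularValues

theorem isSingularValues_unitary_conj_iff {n : ℕ} {U M : Matrix (Fin n) (Fin n) ℂ}
    (hU : Uᴴ * U = 1) {σ : Fin n → ℝ} :
    IsSingularValues (U * M * Uᴴ) σ ↔ IsSingularValues M σ := by
  have hconj : (U * M * Uᴴ)ᴴ * (U * M * Uᴴ) = U * (Mᴴ * M * Uᴴ) := by
    simp only [conjTranspose_mul, conjTranspose_conjTranspose, Matrix.mul_assoc]
    rw [← Matrix.mul_assoc Uᴴ U, hU, Matrix.one_mul]
  unfold IsSingularValues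
  rw [hconj, charpoly_mul_comm, Matrix.mul_assoc, hU, Matrix.mul_one]

theorem isSingularValues_conjTranspose_iff {n : ℕ} {M : Matrix (Fin n) (Fin n) ℂ}
    {σ : Fin n → ℝ} : IsSingularValues Mᴴ σ ↔ IsSingularValues M σ := by
  unfold IsSingularValues
  rw [conjTranspose_conjTranspose, charpoly_mul_comm]

theorem IsSingularValues.interlace {n : ℕ} {M : Matrix (Fin (n + 1)) (Fin (n + 1)) ℂ}
    {N : Matrix (Fin n) (Fin n) ℂ} {σ : Fin (n + 1) → ℝ} {τ : Fin n → ℝ}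
    (hσ : IsSingularValues M σ) (hτ : IsSingularValues N τ) {f : Fin n → Fin (n + 1)}
    (hf : Function.Injective f) (hMN : (Mᴴ * M).submatrix f f = Nᴴ * N) (k : Fin n) :
    τ k ≤ σ k.castSucc ∧ σ k.succ ≤ τ k := by
  have hsq := (isHermitian_conjTranspose_mul_self M).interlace hf hσ.antitone_sq hτ.antitone_sq
    hσ.charpoly_conjTranspose_mul_self (hMN ▸ hτ.charpoly_conjTranspose_mul_self) k
  exact ⟨(sq_le_sq₀ (hτ.2.1 _) (hσ.2.1 _)).mp hsq.1, (sq_le_sq₀ (hσ.2.1 _) (hτ.2.1 _)).mp hsq.2⟩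

theorem IsSingularValues.le_castSucc_of_submatrix_castSucc {n : ℕ}
    {M : Matrix (Fin (n + 1)) (Fin (n + 1)) ℂ} (hM : M.IsUpperTriangular) {σ : Fin (n + 1) → ℝ}
    {τ : Fin n → ℝ} (hσ : IsSingularValues M σ)
    (hτ : IsSingularValues (M.submatrix Fin.castSucc Fin.castSucc) τ) (k : Fin n) :
    τ k ≤ σ k.castSucc :=
  (hσ.interlace hτ (Fin.castSucc_injective n)
    (by rw [IsUpperTriangular.submatrix_castSucc_mul _ hM, ← conjTranspose_submatrix]) k).1

theorem IsSingularValues.succ_le_of_submatrix_succ {n : ℕ}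
    {M : Matrix (Fin (n + 1)) (Fin (n + 1)) ℂ} (hM : M.IsUpperTriangular) {σ : Fin (n + 1) → ℝ}
    {τ : Fin n → ℝ} (hσ : IsSingularValues M σ)
    (hτ : IsSingularValues (M.submatrix Fin.succ Fin.succ) τ) (k : Fin n) :
    σ k.succ ≤ τ k :=
  ((isSingularValues_conjTranspose_iff.mpr hσ).interlace
    (isSingularValues_conjTranspose_iff.mpr hτ) (Fin.succ_injective n)
    (by rw [conjTranspose_conjTranspose, conjTranspose_conjTranspose, hM.submatrix_succ_mul,
      ← conjTranspose_submatrix]) k).2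

theorem stmt19_general {n : ℕ} (A T U : Matrix (Fin (n + 1)) (Fin (n + 1)) ℂ)
    (hU : Uᴴ * U = 1) (hSchur : A = U * T * Uᴴ)
    (hTut : ∀ i j : Fin (n + 1), j < i → T i j = 0)
    (π : Fin (n + 1) → ℂ)
    (σ : ℕ → Fin (n + 1) → ℝ) (hσ : ∀ m : ℕ, IsSingularValues (A ^ m) (σ m))
    (σ₁ : ℕ → Fin n → ℝ)
    (hσ₁ : ∀ m : ℕ, IsSingularValues ((T.submatrix Fin.succ Fin.succ) ^ m) (σ₁ m))
    (hlim₁ : ∀ i : Fin n, Tendsto (fun m : ℕ => (σ₁ m i) ^ (1 / (m : ℝ))) atTop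
      (nhds (‖π i.succ‖)))
    (σₙ : ℕ → Fin n → ℝ)
    (hσₙ : ∀ m : ℕ,
      IsSingularValues ((T.submatrix Fin.castSucc Fin.castSucc) ^ m) (σₙ m))
    (hlimₙ : ∀ i : Fin n, Tendsto (fun m : ℕ => (σₙ m i) ^ (1 / (m : ℝ))) atTop
      (nhds (‖π i.castSucc‖)))
    (i : Fin (n + 1)) (h1 : 1 ≤ (i : ℕ)) (h2 : (i : ℕ) < n) :
    limsup (fun m : ℕ => (σ m i) ^ (1 / (m : ℝ))) atTop ≤ ‖π i‖ ∧
    ‖π i‖ ≤ liminf (fun m : ℕ => (σ m i) ^ (1 / (m : ℝ))) atTop := by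
  have hT : T.IsUpperTriangular := fun i j => hTut i j
  obtain ⟨k, rfl⟩ : ∃ k : Fin n, k.castSucc = i := ⟨⟨i, h2⟩, rfl⟩
  obtain ⟨k₁, hk₁⟩ : ∃ k₁ : Fin n, k₁.succ = k.castSucc :=
    ⟨⟨k - 1, by omega⟩, Fin.ext (Nat.sub_add_cancel h1)⟩
  have hsq (m : ℕ) : σₙ m k ≤ σ m k.castSucc ∧ σ m k.castSucc ≤ σ₁ m k₁ := by
    have hAm : A ^ m = U * T ^ m * Uᴴ :=
      hSchur ▸ Units.conj_pow ⟨U, Uᴴ, mul_eq_one_comm.mp hU, hU⟩ T m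
    have hσT : IsSingularValues (T ^ m) (σ m) :=
      (isSingularValues_unitary_conj_iff hU).mp (hAm ▸ hσ m)
    exact ⟨hσT.le_castSucc_of_submatrix_castSucc (hT.pow m)
        (hT.submatrix_castSucc_pow m ▸ hσₙ m) k,
      hk₁ ▸ hσT.succ_le_of_submatrix_succ (hT.pow m) (hT.submatrix_succ_pow m ▸ hσ₁ m) k₁⟩
  have hlim : Tendsto (fun m : ℕ => σ m k.castSucc ^ (1 / (m : ℝ))) atTop
      (nhds ‖π k.castSucc‖) :=
    tendsto_of_tendsto_of_tendsto_of_le_of_le (hlimₙ k) (hk₁ ▸ hlim₁ k₁)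
      (fun m => Real.rpow_le_rpow ((hσₙ m).2.1 k) (hsq m).1 (by positivity))
      (fun m => Real.rpow_le_rpow ((hσ m).2.1 _) (hsq m).2 (by positivity))
  exact ⟨hlim.limsup_eq.le, hlim.liminf_eq.ge⟩

/-- Inductive step for the singular-value growth rate theorem: via a Schur
triangularization `A = U T Uᴴ` with upper triangular `T` having diagonal
`π₁, …, πₙ` (nonzero, decreasing moduli), if the singular values of powers of the
two principal submatrices of `T` (deleting the first, resp. last, row and column)
have growth rates `|π₂|, …, |πₙ|`, resp. `|π₁|, …, |π_{n−1}|`, then for every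
intermediate index `i` one has
`limsup σᵢ(Aᵐ)^{1/m} ≤ |πᵢ| ≤ liminf σᵢ(Aᵐ)^{1/m}`. -/
theorem stmt19 {n : ℕ} (A T U : Matrix (Fin (n + 1)) (Fin (n + 1)) ℂ)
    (hU : Uᴴ * U = 1) (hSchur : A = U * T * Uᴴ)
    (hTut : ∀ i j : Fin (n + 1), j < i → T i j = 0)
    (π : Fin (n + 1) → ℂ) (hdiag : ∀ i, T i i = π i)
    (hord : Antitone fun i => ‖π i‖) (hnz : ∀ i, π i ≠ 0)
    (σ : ℕ → Fin (n + 1) → ℝ) (hσ : ∀ m : ℕ, IsSingularValues (A ^ m) (σ m))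
    (σ₁ : ℕ → Fin n → ℝ)
    (hσ₁ : ∀ m : ℕ, IsSingularValues ((T.submatrix Fin.succ Fin.succ) ^ m) (σ₁ m))
    (hlim₁ : ∀ i : Fin n, Tendsto (fun m : ℕ => (σ₁ m i) ^ (1 / (m : ℝ))) atTop
      (nhds (‖π i.succ‖)))
    (σₙ : ℕ → Fin n → ℝ)
    (hσₙ : ∀ m : ℕ,
      IsSingularValues ((T.submatrix Fin.castSucc Fin.castSucc) ^ m) (σₙ m))
    (hlimₙ : ∀ i : Fin n, Tendsto (fun m : ℕ => (σₙ m i) ^ (1 / (m : ℝ))) atTop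
      (nhds (‖π i.castSucc‖)))
    (i : Fin (n + 1)) (h1 : 1 ≤ (i : ℕ)) (h2 : (i : ℕ) < n) :
    limsup (fun m : ℕ => (σ m i) ^ (1 / (m : ℝ))) atTop ≤ ‖π i‖ ∧
    ‖π i‖ ≤ liminf (fun m : ℕ => (σ m i) ^ (1 / (m : ℝ))) atTop :=
  stmt19_general A T U hU hSchur hTut π σ hσ σ₁ hσ₁ hlim₁ σₙ hσₙ hlimₙ i h1 h2
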